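/- A rational function R is called Δ-normal if R(x) = Σ_{α∈A} Σ_{m=1}^{M} A_{m,α}/(x+α)^m + P(x), where A is a finite set of nonnegative integers, D_Δ^{M-m} A_{m,α} ∈ ℤ for all m, α, and D_Δ^{M} P is an integer-valued polynomial. Theorem: the product of a Δ-normal rational function with an integer-valued polynomial of degree at most Δ is again Δ-normal (with the same maximal pole order M). -/

import Mathlib

/-- `D_Δ = lcm(1,2,...,Δ)`. -/
def Dlcm (Δ : ℕ) : ℕ := (Finset.Icc 1 Δ).lcm id

/-- A function `R : ℚ → ℚ` (a rational function, given off its poles) is `Δ`-normal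
with maximal pole order `M` if
`R(x) = Σ_{α∈A} Σ_{m=1}^{M} A_{m,α}/(x+α)^m + P(x)` where `A` is a finite set of
nonnegative integers, `D_Δ^{M-m} A_{m,α} ∈ ℤ`, and `D_Δ^M P` is integer-valued. -/
def IsDeltaNormal (Δ M : ℕ) (R : ℚ → ℚ) : Prop :=
  ∃ (𝒜 : Finset ℕ) (coef : ℕ → ℕ → ℚ) (P : Polynomial ℚ),
    (∀ m ∈ Finset.Icc 1 M, ∀ α ∈ 𝒜,
      ∃ z : ℤ, ((Dlcm Δ : ℚ) ^ (M - m)) * coef m α = z) ∧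
    (∀ n : ℤ, ∃ z : ℤ, ((Dlcm Δ : ℚ) ^ M) * P.eval (n : ℚ) = z) ∧
    (∀ x : ℚ, (∀ α ∈ 𝒜, x + (α : ℚ) ≠ 0) →
      R x = (∑ α ∈ 𝒜, ∑ m ∈ Finset.Icc 1 M, coef m α / (x + (α : ℚ)) ^ m) + P.eval x)

/-!
Write `T(x) = U_α(x + α)` with `U_α = T(X - α)`, again integer-valued of degree `≤ Δ`, with
coefficients `c_j`. For `y ≠ 0`, `U(y) / y^m = Q_m(y) + Σ_{k=1}^m c_{m-k} / y^k` where
`Q_m = divX^[m] U`, so the polar part of `R · T` has coefficients `Σ_{m ≥ k} A_{m,α} c_{m-k}`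
and the `A_{m,α} Q_m(x + α)` go into the polynomial part. Integrality rests on one fact: if `V` is
integer-valued of degree `≤ Δ` then so is `D_Δ · divX V`. Indeed, by Newton's forward-difference
formula `V` is a `ℤ`-combination of the binomial polynomials `binom(X, k)`, `k ≤ Δ`, and
`divX binom(X, k) = binom(X - 1, k - 1) / k` with `k ∣ D_Δ`. Iterating, `D_Δ^m Q_m` is
integer-valued; at `0` this gives `D_Δ^j c_j ∈ ℤ`.
-/

open Polynomial Finset

lemma divX_X_mul {R : Type*} [Semiring R] (p : R[X]) : divX (X * p) = p := by
  ext n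
  simp [coeff_X_mul]

lemma natDegree_iterate_divX_le {R : Type*} [Semiring R] (p : R[X]) (m : ℕ) :
    (divX^[m] p).natDegree ≤ p.natDegree := by
  induction m with
  | zero => rfl
  | succ m ih => exact (Function.iterate_succ_apply' divX m p ▸ natDegree_divX_le).trans ih

lemma coeff_iterate_divX {R : Type*} [Semiring R] (p : R[X]) (m n : ℕ) :
    (divX^[m] p).coeff n = p.coeff (n + m) := by
  induction m generalizing n with
  | zero => rfl
  | succ m ih => rw [Function.iterate_succ_apply', coeff_divX, ih, add_right_comm, add_assoc]

lemma eval_div_pow_eq {K : Type*} [Field K] (p : K[X]) {y : K} (hy : y ≠ 0) (m : ℕ) :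
    p.eval y / y ^ m = (divX^[m] p).eval y + ∑ k ∈ Icc 1 m, p.coeff (m - k) / y ^ k := by
  induction m generalizing p with
  | zero => simp
  | succ m ih =>
    have hsplit : p.eval y / y ^ (m + 1) = (divX p).eval y / y ^ m + p.coeff 0 / y ^ (m + 1) := by
      conv_lhs => rw [← X_mul_divX_add p]
      simp only [eval_add, eval_mul, eval_X, eval_C]
      field_simp
      ring
    rw [hsplit, ih, Function.iterate_succ_apply, sum_Icc_succ_top (by omega), Nat.sub_self,
      add_assoc]
    congr 2
    exact sum_congr rfl fun k hk => by
      rw [coeff_divX, show m - k + 1 = m + 1 - k by simp at hk; omega]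

lemma sum_div_pow_mul_eval {K : Type*} [Field K] (M : ℕ) (a : ℕ → K) (p : K[X]) {y : K}
    (hy : y ≠ 0) :
    (∑ m ∈ Icc 1 M, a m / y ^ m) * p.eval y =
      ∑ k ∈ Icc 1 M, (∑ m ∈ Icc k M, a m * p.coeff (m - k)) / y ^ k +
        ∑ m ∈ Icc 1 M, a m * (divX^[m] p).eval y := by
  calc (∑ m ∈ Icc 1 M, a m / y ^ m) * p.eval y
      = ∑ m ∈ Icc 1 M, a m * (p.eval y / y ^ m) := by
        rw [sum_mul]
        exact sum_congr rfl fun m _ => by ring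
    _ = ∑ m ∈ Icc 1 M, ∑ k ∈ Icc 1 m, a m * p.coeff (m - k) / y ^ k +
        ∑ m ∈ Icc 1 M, a m * (divX^[m] p).eval y := by
        simp_rw [eval_div_pow_eq p hy, mul_add, mul_sum, mul_div_assoc, sum_add_distrib, add_comm]
    _ = _ := by
        rw [sum_comm' (t' := Icc 1 M) (s' := fun k => Icc k M) (fun m k => by simp; omega)]
        simp_rw [sum_div]

lemma mem_bot_iff_exists_eq_intCast {q : ℚ} : q ∈ (⊥ : Subring ℚ) ↔ ∃ z : ℤ, q = z := by
  simp only [Subring.mem_bot, eq_comm]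

noncomputable def intValued : Subring ℚ[X] := ⨅ n : ℤ, (⊥ : Subring ℚ).comap (evalRingHom (n : ℚ))

lemma mem_intValued {p : ℚ[X]} :
    p ∈ intValued ↔ ∀ n : ℤ, p.eval (n : ℚ) ∈ (⊥ : Subring ℚ) := by
  simp [intValued, Subring.mem_iInf]

lemma comp_X_sub_C_mem_intValued {p : ℚ[X]} (hp : p ∈ intValued) (a : ℤ) :
    p.comp (X - C (a : ℚ)) ∈ intValued :=
  mem_intValued.2 fun n => by simpa using mem_intValued.1 hp (n - a)

noncomputable def binomialPoly (k : ℕ) : ℚ[X] := C (k.factorial : ℚ)⁻¹ * descPochhammer ℚ k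

lemma binomialPoly_eval_intCast (k : ℕ) (n : ℤ) :
    (binomialPoly k).eval (n : ℚ) = (Ring.choose n k : ℤ) := by
  have h := Ring.descPochhammer_eq_factorial_smul_choose n k
  rw [← eval_eq_smeval] at h
  rw [binomialPoly, eval_mul, eval_C, ← descPochhammer_eval_cast, h, nsmul_eq_mul]
  push_cast
  field_simp

lemma binomialPoly_eval_natCast (k n : ℕ) : (binomialPoly k).eval (n : ℚ) = n.choose k := by
  simpa [Ring.choose_natCast] using binomialPoly_eval_intCast k n

lemma binomialPoly_mem_intValued (k : ℕ) : binomialPoly k ∈ intValued :=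
  mem_intValued.2 fun n => by
    rw [binomialPoly_eval_intCast]
    exact intCast_mem _ _

lemma divX_binomialPoly_succ (k : ℕ) :
    divX (binomialPoly (k + 1)) = C ((k + 1 : ℚ)⁻¹) * (binomialPoly k).comp (X - 1) := by
  rw [← divX_X_mul (C _ * _)]
  congr 1
  simp only [binomialPoly, descPochhammer_succ_left, mul_comp, C_comp, Nat.factorial_succ]
  push_cast
  rw [mul_inv, C_mul]
  ring

lemma eq_sum_fwdDiff_mul_binomialPoly (p : ℚ[X]) {d : ℕ} (hp : p.natDegree ≤ d) :
    p = ∑ k ∈ range (d + 1), C ((fwdDiff 1)^[k] p.eval 0) * binomialPoly k := by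
  refine eq_of_infinite_eval_eq _ _ <|
    Set.infinite_of_injective_forall_mem Nat.cast_injective fun n : ℕ => ?_
  have hnewton := shift_eq_sum_fwdDiff_iter (1 : ℚ) p.eval n 0
  rw [zero_add, nsmul_one] at hnewton
  simp only [Set.mem_ofPred_eq, eval_finsetSum, eval_mul, eval_C, binomialPoly_eval_natCast,
    hnewton, nsmul_eq_mul]
  calc ∑ k ∈ range (n + 1), (n.choose k : ℚ) * (fwdDiff 1)^[k] p.eval 0
      = ∑ k ∈ range (n + d + 1), (n.choose k : ℚ) * (fwdDiff 1)^[k] p.eval 0 :=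
        sum_subset (range_subset_range.2 (by omega)) fun k hk hkn => by
          rw [Nat.choose_eq_zero_of_lt (by simp at hk hkn; omega), Nat.cast_zero, zero_mul]
    _ = ∑ k ∈ range (d + 1), (fwdDiff 1)^[k] p.eval 0 * n.choose k := by
        simp_rw [mul_comm (n.choose _ : ℚ)]
        refine (sum_subset (range_subset_range.2 (by omega)) fun k hk hkd => ?_).symm
        rw [fwdDiff_iter_eq_zero_of_degree_lt (by simp at hk hkd; omega), Pi.zero_apply, zero_mul]

lemma fwdDiff_iter_eval_zero_mem_bot {p : ℚ[X]} (hp : p ∈ intValued) (k : ℕ) :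
    (fwdDiff 1)^[k] p.eval 0 ∈ (⊥ : Subring ℚ) := by
  rw [fwdDiff_iter_eq_sum_shift]
  exact sum_mem fun j _ => zsmul_mem (by simpa using mem_intValued.1 hp j) _

lemma exists_eq_sum_intCast_mul_binomialPoly {p : ℚ[X]} (hp : p ∈ intValued) {d : ℕ}
    (hdeg : p.natDegree ≤ d) :
    ∃ a : ℕ → ℤ, p = ∑ k ∈ range (d + 1), C (a k : ℚ) * binomialPoly k := by
  choose a ha using fun k => Subring.mem_bot.1 (fwdDiff_iter_eval_zero_mem_bot hp k)
  exact ⟨a, by simp_rw [ha]; exact eq_sum_fwdDiff_mul_binomialPoly p hdeg⟩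

section

variable {Δ : ℕ}

lemma C_dlcm_mul_divX_binomialPoly_mem_intValued {k : ℕ} (hk : k ≤ Δ) :
    C (Dlcm Δ : ℚ) * divX (binomialPoly k) ∈ intValued := by
  cases k with
  | zero => simp [binomialPoly]
  | succ k =>
    obtain ⟨e, he⟩ : k + 1 ∣ Dlcm Δ := dvd_lcm (mem_Icc.2 ⟨by omega, hk⟩)
    have hcancel : (Dlcm Δ : ℚ) * (k + 1 : ℚ)⁻¹ = e := by
      rw [he]
      push_cast
      field_simp
    rw [divX_binomialPoly_succ, ← mul_assoc, ← C_mul, hcancel, C_eq_natCast]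
    exact mul_mem (natCast_mem _ e)
      (by simpa using comp_X_sub_C_mem_intValued (binomialPoly_mem_intValued k) 1)

variable {p : ℚ[X]}

lemma C_dlcm_mul_divX_mem_intValued (hp : p ∈ intValued) (hdeg : p.natDegree ≤ Δ) :
    C (Dlcm Δ : ℚ) * divX p ∈ intValued := by
  obtain ⟨a, rfl⟩ := exists_eq_sum_intCast_mul_binomialPoly hp hdeg
  rw [← divX_hom_toFun, map_sum, mul_sum]
  refine sum_mem fun k hk => ?_
  rw [divX_hom_toFun, divX_C_mul, mul_left_comm, C_eq_intCast]
  exact mul_mem (intCast_mem _ _)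
    (C_dlcm_mul_divX_binomialPoly_mem_intValued (by simp at hk; omega))

lemma C_dlcm_pow_mul_iterate_divX_mem_intValued (hp : p ∈ intValued) (hdeg : p.natDegree ≤ Δ)
    (m : ℕ) : C ((Dlcm Δ : ℚ) ^ m) * divX^[m] p ∈ intValued := by
  induction m with
  | zero => simpa using hp
  | succ m ih =>
    rw [Function.iterate_succ_apply', pow_succ', C_mul, mul_assoc, ← divX_C_mul]
    exact C_dlcm_mul_divX_mem_intValued ih
      (natDegree_C_mul_le _ _ |>.trans <| (natDegree_iterate_divX_le p m).trans hdeg)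

lemma dlcm_pow_mul_coeff_mem_bot (hp : p ∈ intValued) (hdeg : p.natDegree ≤ Δ) (j : ℕ) :
    (Dlcm Δ : ℚ) ^ j * p.coeff j ∈ (⊥ : Subring ℚ) := by
  simpa [← coeff_zero_eq_eval_zero, coeff_iterate_divX] using
    mem_intValued.1 (C_dlcm_pow_mul_iterate_divX_mem_intValued hp hdeg j) 0

variable {M : ℕ} {a : ℕ → ℚ}

lemma dlcm_pow_mul_sum_mul_coeff_mem_bot (hp : p ∈ intValued) (hdeg : p.natDegree ≤ Δ)
    (ha : ∀ m ∈ Icc 1 M, (Dlcm Δ : ℚ) ^ (M - m) * a m ∈ (⊥ : Subring ℚ)) {k : ℕ} (hk : 1 ≤ k) :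
    (Dlcm Δ : ℚ) ^ (M - k) * ∑ m ∈ Icc k M, a m * p.coeff (m - k) ∈ (⊥ : Subring ℚ) := by
  rw [mul_sum]
  refine sum_mem fun m hm => ?_
  rw [mem_Icc] at hm
  rw [show M - k = (M - m) + (m - k) by omega, pow_add, mul_mul_mul_comm]
  exact mul_mem (ha m (mem_Icc.2 ⟨by omega, hm.2⟩)) (dlcm_pow_mul_coeff_mem_bot hp hdeg _)

lemma dlcm_pow_mul_sum_mul_eval_iterate_divX_mem_bot (hp : p ∈ intValued) (hdeg : p.natDegree ≤ Δ)
    (ha : ∀ m ∈ Icc 1 M, (Dlcm Δ : ℚ) ^ (M - m) * a m ∈ (⊥ : Subring ℚ)) (t : ℤ) :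
    (Dlcm Δ : ℚ) ^ M * ∑ m ∈ Icc 1 M, a m * (divX^[m] p).eval (t : ℚ) ∈ (⊥ : Subring ℚ) := by
  rw [mul_sum]
  refine sum_mem fun m hm => ?_
  have hQ := mem_intValued.1 (C_dlcm_pow_mul_iterate_divX_mem_intValued hp hdeg m) t
  rw [eval_mul, eval_C] at hQ
  rw [show M = (M - m) + m by simp at hm; omega, pow_add, mul_mul_mul_comm]
  exact mul_mem (ha m hm) hQ

end

/-- The product of a `Δ`-normal rational function with an integer-valued polynomial of
degree at most `Δ` is again `Δ`-normal, with the same maximal pole order `M`. -/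
theorem deltaNormal_mul_integer_valued
    (Δ M : ℕ) (R : ℚ → ℚ) (hR : IsDeltaNormal Δ M R)
    (T : Polynomial ℚ) (hT : ∀ n : ℤ, ∃ z : ℤ, T.eval (n : ℚ) = z)
    (hdeg : T.natDegree ≤ Δ) :
    IsDeltaNormal Δ M (fun x => R x * T.eval x) := by
  obtain ⟨𝒜, coef, P, hcoef, hP, hR⟩ := hR
  have hT' : T ∈ intValued := mem_intValued.2 fun n => mem_bot_iff_exists_eq_intCast.2 (hT n)
  set U : ℕ → ℚ[X] := fun α => T.comp (X - C (α : ℚ))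
  have hU (α : ℕ) : U α ∈ intValued := by simpa [U] using comp_X_sub_C_mem_intValued hT' α
  have hUdeg (α : ℕ) : (U α).natDegree ≤ Δ := by
    rwa [natDegree_comp, natDegree_X_sub_C, mul_one]
  have hcoef' {α : ℕ} (hα : α ∈ 𝒜) (m : ℕ) (hm : m ∈ Icc 1 M) :
      (Dlcm Δ : ℚ) ^ (M - m) * coef m α ∈ (⊥ : Subring ℚ) :=
    mem_bot_iff_exists_eq_intCast.2 (hcoef m hm α hα)
  refine ⟨𝒜, fun k α => ∑ m ∈ Icc k M, coef m α * (U α).coeff (m - k),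
    ∑ α ∈ 𝒜, ∑ m ∈ Icc 1 M, C (coef m α) * (divX^[m] (U α)).comp (X + C (α : ℚ)) + P * T,
    fun k hk α hα => mem_bot_iff_exists_eq_intCast.1 <|
      dlcm_pow_mul_sum_mul_coeff_mem_bot (hU α) (hUdeg α) (hcoef' hα) (mem_Icc.1 hk).1,
    fun n => mem_bot_iff_exists_eq_intCast.1 ?_, fun x hx => ?_⟩
  · simp only [eval_add, eval_mul, eval_finsetSum, eval_comp, eval_C, eval_X, mul_add, mul_sum]
    refine add_mem (sum_mem fun α hα => ?_) ?_
    · simpa [mul_sum] using dlcm_pow_mul_sum_mul_eval_iterate_divX_mem_bot (hU α) (hUdeg α)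
        (hcoef' hα) (n + α)
    · rw [← mul_assoc]
      exact mul_mem (mem_bot_iff_exists_eq_intCast.2 (hP n)) (mem_intValued.1 hT' n)
  · have hUeval (α : ℕ) : (U α).eval (x + α) = T.eval x := by simp [U]
    beta_reduce
    rw [hR x hx, add_mul, sum_mul,
      sum_congr rfl fun α hα => by rw [← hUeval α, sum_div_pow_mul_eval M _ _ (hx α hα)],
      sum_add_distrib]
    simp only [eval_add, eval_mul, eval_finsetSum, eval_comp, eval_C, eval_X]
    ring
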